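/- Let (a_n) be a sequence of real numbers such that there exists g > 0 with |a_n − a_m| ≥ g for all n ≠ m. Then for Lebesgue almost every x ∈ ℝ, the sequence (a_n x) is uniformly distributed modulo 1. -/

import Mathlib

open Filter MeasureTheory Set
open scoped Topology

noncomputable def weylAvg (u : ℕ → ℝ) (N : ℕ) : ℂ :=
  (N : ℂ)⁻¹ * ∑ n ∈ Finset.Icc 1 N, Complex.exp (2 * Real.pi * Complex.I * (u n : ℂ))

/-- Weyl criterion: `(u n)` is uniformly distributed mod 1. -/
def UDmod1 (u : ℕ → ℝ) : Prop :=
  ∀ k : ℤ, k ≠ 0 → Tendsto (fun N => weylAvg (fun n => (k : ℝ) * u n) N) atTop (nhds 0)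

noncomputable def scatterSum (a : ℕ → ℝ) (δ : ℝ) (N : ℕ) : ℝ :=
  ((N : ℝ) ^ 2)⁻¹ * ∑ n ∈ Finset.Icc 1 N, ∑ m ∈ Finset.Ico 1 n,
    (if a n = a m then 1 else min (|a n - a m| ^ (-δ)) 1)

def IsDeltaScattered (a : ℕ → ℝ) (δ : ℝ) : Prop :=
  ∃ ε > 0, ∀ᶠ N : ℕ in atTop, scatterSum a δ N ≤ ((Real.log N) ^ ((1 : ℝ) + ε))⁻¹

def IsScattered (a : ℕ → ℝ) : Prop := ∀ δ : ℝ, 0 < δ → δ ≤ 1 → IsDeltaScattered a δ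

/-! For `k ≠ 0` the frequencies `k * aₙ` are again `g`-separated, so it suffices to show that the
Weyl averages `W_N(x) = N⁻¹ ∑_{n ≤ N} e(aₙ x)` of a `g`-separated sequence tend to `0` for almost
every `x`. Expanding `|W_N|²` and integrating over a bounded interval, the pairs with
`|aₙ - aₘ| < R` (at most `2R/g + 2` for each `n`, by separation) contribute `O(R/N)`, and every other
pair contributes `O(1/R)` since `|∫ e(θx) dx| ≤ 1/(π|θ|)`. With `N = M⁴` and `R = M²` the mean square
is `O(1/M²)`, which is summable in `M`, so `W_{M⁴}(x) → 0` almost everywhere. Between consecutive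
fourth powers the averages change by `O(1/M)`, which gives convergence along all `N`. -/

open Complex
open scoped Real ComplexConjugate

theorem card_filter_abs_sub_lt_le {ι : Type*} {a : ι → ℝ} {g : ℝ} (hg : 0 < g)
    (hsep : ∀ n m, n ≠ m → g ≤ |a n - a m|) (s : Finset ι) (c : ℝ) {R : ℝ} (hR : 0 ≤ R) :
    ((s.filter fun m => |a m - c| < R).card : ℝ) ≤ 2 * R / g + 2 := by
  set K : ℕ := ⌈R / g⌉₊
  have hmaps : MapsTo (fun m => ⌊(a m - c) / g⌋) (s.filter fun m => |a m - c| < R)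
      (Finset.Ico (-K : ℤ) K) := by
    intro m hm
    have hlt : |(a m - c) / g| < K := by
      rw [abs_div, abs_of_pos hg, div_lt_iff₀ hg]
      exact (Finset.mem_filter.1 hm).2.trans_le (by rw [← div_le_iff₀ hg]; exact Nat.le_ceil _)
    rw [abs_lt] at hlt
    rw [Finset.coe_Ico, Set.mem_Ico, Int.le_floor, Int.floor_lt]
    push_cast
    exact ⟨hlt.1.le, hlt.2⟩
  have hinj : InjOn (fun m => ⌊(a m - c) / g⌋) (s.filter fun m => |a m - c| < R) := by
    intro m _ m' _ hfloor
    by_contra hne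
    have h := Int.abs_sub_lt_one_of_floor_eq_floor hfloor
    rw [← sub_div, sub_sub_sub_cancel_right, abs_div, abs_of_pos hg, div_lt_one hg] at h
    exact (hsep m m' hne).not_gt h
  have hcard := Finset.card_le_card_of_injOn _ hmaps hinj
  rw [Int.card_Ico, sub_neg_eq_add, ← two_mul] at hcard
  calc ((s.filter fun m => |a m - c| < R).card : ℝ) ≤ 2 * K := by
        exact_mod_cast (by omega : _ ≤ 2 * K)
    _ ≤ 2 * (R / g + 1) := by gcongr; exact (Nat.ceil_lt_add_one (by positivity)).le
    _ = 2 * R / g + 2 := by ring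

theorem exp_two_pi_I_mul_conj (p q : ℝ) :
    exp (2 * π * I * p) * conj (exp (2 * π * I * q)) = exp (2 * π * I * (p - q : ℝ)) := by
  rw [← exp_conj, ← exp_add]
  simp only [map_mul, conj_I, conj_ofReal, map_ofNat]
  push_cast
  ring_nf

theorem norm_exp_two_pi_I_mul (t : ℝ) : ‖exp (2 * π * I * t)‖ = 1 := by
  rw [show 2 * π * I * t = ((2 * π * t : ℝ) : ℂ) * I by push_cast; ring]
  exact norm_exp_ofReal_mul_I _

theorem norm_integral_exp_two_pi_I_mul_le {θ : ℝ} (hθ : θ ≠ 0) (u v : ℝ) :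
    ‖∫ x in u..v, exp (2 * π * I * (θ * x : ℝ))‖ ≤ 1 / (π * |θ|) := by
  have hc : 2 * π * I * θ ≠ 0 := by simp [hθ, Real.pi_ne_zero]
  have hnorm : ∀ t : ℝ, ‖exp (2 * π * I * θ * t)‖ = 1 := fun t => by
    simpa [mul_assoc] using norm_exp_two_pi_I_mul (θ * t)
  simp_rw [ofReal_mul, ← mul_assoc]
  rw [integral_exp_mul_complex hc, norm_div]
  calc ‖exp (2 * π * I * θ * v) - exp (2 * π * I * θ * u)‖ / ‖2 * π * I * θ‖
      ≤ (1 + 1) / (2 * π * |θ|) := by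
        gcongr
        · exact (norm_sub_le _ _).trans_eq (by rw [hnorm, hnorm])
        · simp [abs_of_pos Real.pi_pos]
    _ = 1 / (π * |θ|) := by field_simp; norm_num

theorem norm_integral_exp_mul_conj_le (p q : ℝ) {u v R : ℝ} (huv : u ≤ v) (hR : 0 < R) :
    ‖∫ x in u..v, exp (2 * π * I * (p * x : ℝ)) * conj (exp (2 * π * I * (q * x : ℝ)))‖ ≤
      (if |q - p| < R then v - u else 0) + 1 / (π * R) := by
  simp_rw [exp_two_pi_I_mul_conj, ← sub_mul]
  split_ifs with hclose
  · refine (intervalIntegral.norm_integral_le_of_norm_le_const (C := 1) fun x _ => ?_).trans ?_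
    · exact (norm_exp_two_pi_I_mul _).le
    · rw [one_mul, abs_of_nonneg (sub_nonneg.2 huv)]
      exact le_add_of_nonneg_right (by positivity)
  · rw [not_lt, abs_sub_comm] at hclose
    refine (norm_integral_exp_two_pi_I_mul_le (abs_pos.1 (hR.trans_le hclose)) u v).trans ?_
    rw [zero_add]
    gcongr

theorem integral_norm_sum_sq_le {ι : Type*} (s : Finset ι) {f : ι → ℝ → ℂ}
    (hf : ∀ i, Continuous (f i)) {u v : ℝ} (huv : u ≤ v) :
    ∫ x in u..v, ‖∑ i ∈ s, f i x‖ ^ 2 ≤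
      ∑ i ∈ s, ∑ j ∈ s, ‖∫ x in u..v, f i x * conj (f j x)‖ := by
  have hsq : ∀ x, ((‖∑ i ∈ s, f i x‖ ^ 2 : ℝ) : ℂ) = ∑ i ∈ s, ∑ j ∈ s, f i x * conj (f j x) := by
    intro x
    rw [ofReal_pow, ← mul_conj', map_sum, Finset.sum_mul_sum]
  have hcont : ∀ i j, Continuous fun x => f i x * conj (f j x) :=
    fun i j => (hf i).mul (continuous_conj.comp (hf j))
  have hnonneg : 0 ≤ ∫ x in u..v, ‖∑ i ∈ s, f i x‖ ^ 2 :=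
    intervalIntegral.integral_nonneg huv fun x _ => sq_nonneg _
  calc ∫ x in u..v, ‖∑ i ∈ s, f i x‖ ^ 2 = ‖((∫ x in u..v, ‖∑ i ∈ s, f i x‖ ^ 2 : ℝ) : ℂ)‖ := by
        rw [norm_real, Real.norm_of_nonneg hnonneg]
    _ = ‖∑ i ∈ s, ∑ j ∈ s, ∫ x in u..v, f i x * conj (f j x)‖ := by
        rw [← intervalIntegral.integral_ofReal, intervalIntegral.integral_congr fun x _ => hsq x,
          intervalIntegral.integral_finsetSum fun i _ =>
            (continuous_finsetSum s fun j _ => hcont i j).intervalIntegrable u v]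
        simp_rw [intervalIntegral.integral_finsetSum fun j _ => (hcont _ j).intervalIntegrable u v]
    _ ≤ _ := (norm_sum_le _ _).trans (Finset.sum_le_sum fun i _ => norm_sum_le _ _)

theorem ae_tendsto_zero_of_summable_integral {α : Type*} [MeasurableSpace α] {μ : Measure α}
    {f : ℕ → α → ℝ} (hf : ∀ n, Integrable (f n) μ) (hf0 : ∀ n x, 0 ≤ f n x)
    (hsum : Summable fun n => ∫ x, f n x ∂μ) :
    ∀ᵐ x ∂μ, Tendsto (fun n => f n x) atTop (𝓝 0) := by
  have hmeas : ∀ n, AEMeasurable (fun x => ENNReal.ofReal (f n x)) μ :=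
    fun n => (hf n).aemeasurable.ennreal_ofReal
  have hfin : ∫⁻ x, ∑' n, ENNReal.ofReal (f n x) ∂μ ≠ ⊤ := by
    rw [lintegral_tsum hmeas]
    simp_rw [← ofReal_integral_eq_lintegral_ofReal (hf _) (ae_of_all _ (hf0 _))]
    rw [← ENNReal.ofReal_tsum_of_nonneg (fun n => integral_nonneg (hf0 n)) hsum]
    exact ENNReal.ofReal_ne_top
  filter_upwards [ae_lt_top' (AEMeasurable.tsum hmeas) hfin] with x hx
  have h := (ENNReal.tendsto_toReal ENNReal.zero_ne_top).comp
    (ENNReal.tendsto_atTop_zero_of_tsum_ne_top hx.ne)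
  simpa [Function.comp_def, ENNReal.toReal_ofReal (hf0 _ x)] using h

theorem continuous_weylAvg_mul (a : ℕ → ℝ) (N : ℕ) :
    Continuous fun x => weylAvg (fun n => a n * x) N := by
  unfold weylAvg
  fun_prop

theorem norm_sq_weylAvg (u : ℕ → ℝ) (N : ℕ) :
    ‖weylAvg u N‖ ^ 2 = ((N : ℝ) ^ 2)⁻¹ * ‖∑ n ∈ Finset.Icc 1 N, exp (2 * π * I * u n)‖ ^ 2 := by
  rw [weylAvg, norm_mul, norm_inv, Complex.norm_natCast, mul_pow, inv_pow]

theorem integral_norm_sq_weylAvg_le {a : ℕ → ℝ} {g : ℝ} (hg : 0 < g)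
    (hsep : ∀ n m, n ≠ m → g ≤ |a n - a m|) {u v : ℝ} (huv : u ≤ v) (N : ℕ) {R : ℝ}
    (hR : 0 < R) :
    ∫ x in u..v, ‖weylAvg (fun n => a n * x) N‖ ^ 2 ≤
      (v - u) * (2 * R / g + 2) / N + 1 / (π * R) := by
  have hvu : 0 ≤ v - u := sub_nonneg.2 huv
  rcases N.eq_zero_or_pos with rfl | hN
  · simp [weylAvg]
    positivity
  set B := 1 / (π * R)
  have hrow : ∀ n, ∑ m ∈ Finset.Icc 1 N, ((if |a m - a n| < R then v - u else 0) + B) ≤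
      (v - u) * (2 * R / g + 2) + N * B := by
    intro n
    rw [Finset.sum_add_distrib, Finset.sum_ite, Finset.sum_const, Finset.sum_const_zero,
      Finset.sum_const, Nat.card_Icc, nsmul_eq_mul, nsmul_eq_mul, add_zero, mul_comm,
      Nat.add_sub_cancel]
    exact add_le_add_left
      (mul_le_mul_of_nonneg_left (card_filter_abs_sub_lt_le hg hsep _ (a n) hR.le) hvu) _
  calc ∫ x in u..v, ‖weylAvg (fun n => a n * x) N‖ ^ 2
      = ((N : ℝ) ^ 2)⁻¹ *
          ∫ x in u..v, ‖∑ n ∈ Finset.Icc 1 N, exp (2 * π * I * (a n * x : ℝ))‖ ^ 2 := by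
        simp_rw [norm_sq_weylAvg, intervalIntegral.integral_const_mul]
    _ ≤ ((N : ℝ) ^ 2)⁻¹ * ∑ n ∈ Finset.Icc 1 N, ((v - u) * (2 * R / g + 2) + N * B) := by
        gcongr
        refine (integral_norm_sum_sq_le _ (fun n => by fun_prop) huv).trans ?_
        exact Finset.sum_le_sum fun n _ => (Finset.sum_le_sum fun m _ =>
          norm_integral_exp_mul_conj_le (a n) (a m) huv hR).trans (hrow n)
    _ = (v - u) * (2 * R / g + 2) / N + B := by
        rw [Finset.sum_const, Nat.card_Icc, nsmul_eq_mul, Nat.add_sub_cancel]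
        field_simp

theorem integral_norm_sq_weylAvg_pow_four_le {a : ℕ → ℝ} {g : ℝ} (hg : 0 < g)
    (hsep : ∀ n m, n ≠ m → g ≤ |a n - a m|) {T : ℝ} (hT : 0 ≤ T) (M : ℕ) :
    ∫ x in -T..T, ‖weylAvg (fun n => a n * x) (M ^ 4)‖ ^ 2 ≤
      (4 * T / g + 4 * T + 1 / π) / M ^ 2 := by
  rcases M.eq_zero_or_pos with rfl | hM
  · simp [weylAvg] -- both sides are junk zeros: `weylAvg u 0 = 0` and `x / 0 = 0`
  have hM1 : (1 : ℝ) ≤ M := by exact_mod_cast hM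
  refine (integral_norm_sq_weylAvg_le hg hsep (neg_le_self hT) (M ^ 4)
    (R := M ^ 2) (by positivity)).trans ?_
  have hM24 : ((M : ℝ) ^ 4)⁻¹ ≤ ((M : ℝ) ^ 2)⁻¹ :=
    inv_anti₀ (by positivity) (pow_le_pow_right₀ hM1 (by norm_num))
  calc (T - -T) * (2 * M ^ 2 / g + 2) / ((M ^ 4 : ℕ) : ℝ) + 1 / (π * M ^ 2)
      = (4 * T / g + 1 / π) / M ^ 2 + 4 * T * ((M : ℝ) ^ 4)⁻¹ := by
        push_cast
        field_simp
        ring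
    _ ≤ (4 * T / g + 1 / π) / M ^ 2 + 4 * T * ((M : ℝ) ^ 2)⁻¹ := by gcongr
    _ = (4 * T / g + 4 * T + 1 / π) / M ^ 2 := by ring

theorem natCast_mul_weylAvg (u : ℕ → ℝ) (N : ℕ) :
    (N : ℂ) * weylAvg u N = ∑ n ∈ Finset.Icc 1 N, exp (2 * π * I * u n) := by
  rcases N.eq_zero_or_pos with rfl | hN
  · simp
  · rw [weylAvg, mul_inv_cancel_left₀ (by exact_mod_cast hN.ne')]

theorem norm_weylAvg_le_of_le (u : ℕ → ℝ) {q N : ℕ} (hqN : q ≤ N) (hN : 0 < N) :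
    ‖weylAvg u N‖ ≤ ‖weylAvg u q‖ + (N - q) / N := by
  have hNr : (0 : ℝ) < N := by exact_mod_cast hN
  have hsplit : (N : ℂ) * weylAvg u N =
      q * weylAvg u q + ∑ n ∈ Finset.Ioc q N, exp (2 * π * I * u n) := by
    have hIcc (k : ℕ) : Finset.Icc 1 k = Finset.Ioc 0 k := Finset.Icc_add_one_left_eq_Ioc 0 k
    rw [natCast_mul_weylAvg, natCast_mul_weylAvg, hIcc, hIcc]
    exact (Finset.sum_Ioc_consecutive (fun n => exp (2 * π * I * u n)) q.zero_le hqN).symm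
  have htail : ‖∑ n ∈ Finset.Ioc q N, exp (2 * π * I * u n)‖ ≤ N - q := by
    refine (norm_sum_le _ _).trans_eq ?_
    simp [norm_exp_two_pi_I_mul, Nat.cast_sub hqN]
  calc ‖weylAvg u N‖ = ‖(N : ℂ) * weylAvg u N‖ / N := by
        rw [norm_mul, Complex.norm_natCast, mul_div_cancel_left₀ _ hNr.ne']
    _ ≤ (N * ‖weylAvg u q‖ + (N - q)) / N := by
        rw [hsplit]
        gcongr
        refine (norm_add_le _ _).trans (add_le_add ?_ htail)
        rw [norm_mul, Complex.norm_natCast]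
        gcongr
    _ = ‖weylAvg u q‖ + (N - q) / N := by field_simp

theorem sqrt_sqrt_pow_four_le (N : ℕ) : N.sqrt.sqrt ^ 4 ≤ N :=
  calc N.sqrt.sqrt ^ 4 = (N.sqrt.sqrt ^ 2) ^ 2 := by ring
    _ ≤ N.sqrt ^ 2 := Nat.pow_le_pow_left (Nat.sqrt_le' _) 2
    _ ≤ N := Nat.sqrt_le' N

theorem lt_sqrt_sqrt_add_one_pow_four (N : ℕ) : N < (N.sqrt.sqrt + 1) ^ 4 :=
  calc N < (N.sqrt + 1) ^ 2 := Nat.lt_succ_sqrt' N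
    _ ≤ ((N.sqrt.sqrt + 1) ^ 2) ^ 2 := Nat.pow_le_pow_left (Nat.lt_succ_sqrt' _) 2
    _ = (N.sqrt.sqrt + 1) ^ 4 := by ring

theorem tendsto_weylAvg_of_tendsto_pow_four {u : ℕ → ℝ}
    (h : Tendsto (fun M => weylAvg u (M ^ 4)) atTop (𝓝 0)) :
    Tendsto (weylAvg u) atTop (𝓝 0) := by
  have hroot : Tendsto (fun N : ℕ => N.sqrt.sqrt) atTop atTop :=
    have hsqrt : Tendsto Nat.sqrt atTop atTop :=
      tendsto_atTop_atTop_of_monotone (fun _ _ => Nat.sqrt_le_sqrt)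
        fun b => ⟨b * b, (Nat.sqrt_eq b).ge⟩
    hsqrt.comp hsqrt
  have hbound : ∀ N : ℕ, 0 < N →
      ‖weylAvg u N‖ ≤ ‖weylAvg u (N.sqrt.sqrt ^ 4)‖ + 15 / N.sqrt.sqrt := by
    intro N hN
    set s := N.sqrt.sqrt
    have hs : (1 : ℝ) ≤ s := by exact_mod_cast Nat.le_sqrt.2 (Nat.le_sqrt.2 hN)
    have hle : ((s ^ 4 : ℕ) : ℝ) ≤ N := by exact_mod_cast sqrt_sqrt_pow_four_le N
    have hlt : (N : ℝ) < (s + 1) ^ 4 := by exact_mod_cast lt_sqrt_sqrt_add_one_pow_four N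
    push_cast at hle
    -- `N - s⁴ < (s + 1)⁴ - s⁴ ≤ 15 s³` and `s⁴ ≤ N`
    refine (norm_weylAvg_le_of_le u (sqrt_sqrt_pow_four_le N) hN).trans (add_le_add_right ?_ _)
    rw [div_le_div_iff₀ (by exact_mod_cast hN) (by positivity)]
    push_cast
    nlinarith [pow_le_pow_left₀ zero_le_one hs 3]
  refine squeeze_zero_norm' (eventually_atTop.2 ⟨1, hbound⟩) ?_
  simpa [Function.comp_def] using (h.norm.add (tendsto_const_div_atTop_nhds_zero_nat 15)).comp hroot

theorem ae_tendsto_weylAvg_of_separated {a : ℕ → ℝ} {g : ℝ} (hg : 0 < g)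
    (hsep : ∀ n m, n ≠ m → g ≤ |a n - a m|) :
    ∀ᵐ x, Tendsto (weylAvg fun n => a n * x) atTop (𝓝 0) := by
  suffices h : ∀ j : ℕ, ∀ᵐ x ∂volume.restrict (Ioc (-j : ℝ) j),
      Tendsto (weylAvg fun n => a n * x) atTop (𝓝 0) by
    filter_upwards [ae_all_iff.2 fun j => (ae_restrict_iff' measurableSet_Ioc).1 (h j)] with x hx
    obtain ⟨j, hj⟩ := exists_nat_gt |x|
    exact hx j ⟨(abs_lt.1 hj).1, (abs_lt.1 hj).2.le⟩
  intro j
  have hsq : ∀ᵐ x ∂volume.restrict (Ioc (-j : ℝ) j),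
      Tendsto (fun M => ‖weylAvg (fun n => a n * x) (M ^ 4)‖ ^ 2) atTop (𝓝 0) := by
    refine ae_tendsto_zero_of_summable_integral
      (fun M => ((continuous_weylAvg_mul a _).norm.pow 2).integrableOn_Ioc)
      (fun M x => sq_nonneg _) ?_
    refine .of_nonneg_of_le (fun M => integral_nonneg fun x => sq_nonneg _) (fun M => ?_)
      ((Real.summable_one_div_nat_pow.2 one_lt_two).mul_left (4 * j / g + 4 * j + 1 / π))
    rw [← intervalIntegral.integral_of_le (by simp), mul_one_div]
    exact integral_norm_sq_weylAvg_pow_four_le hg hsep j.cast_nonneg M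
  filter_upwards [hsq] with x hx
  refine tendsto_weylAvg_of_tendsto_pow_four (tendsto_zero_iff_norm_tendsto_zero.2 ?_)
  simpa using hx.sqrt

theorem stmt1 (a : ℕ → ℝ) (g : ℝ) (hg : 0 < g)
    (hsep : ∀ n m : ℕ, n ≠ m → g ≤ |a n - a m|) :
    ∀ᵐ x ∂(volume : Measure ℝ), UDmod1 (fun n => a n * x) := by
  have hfreq : ∀ k : ℤ, ∀ᵐ x, k ≠ 0 →
      Tendsto (weylAvg fun n => (k : ℝ) * (a n * x)) atTop (𝓝 0) := by
    intro k
    by_cases hk : k = 0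
    · exact ae_of_all _ fun x h => (h hk).elim
    have hsep_k : ∀ n m, n ≠ m → g ≤ |k * a n - k * a m| := fun n m hnm => by
      rw [← mul_sub, abs_mul]
      have hk1 : (1 : ℝ) ≤ |(k : ℝ)| := by exact_mod_cast Int.one_le_abs hk
      exact (hsep n m hnm).trans (le_mul_of_one_le_left (abs_nonneg _) hk1)
    filter_upwards [ae_tendsto_weylAvg_of_separated hg hsep_k] with x hx
    simpa only [mul_assoc] using fun _ => hx
  filter_upwards [ae_all_iff.2 hfreq] with x hx k hk
  exact hx k hk
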